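/- arXiv:1703.09107 — 3 statements merged into one kernel-verified Lean document; each statement's English description precedes it below -/
import Mathlib

section
/- For every function u in H^2(a,b) ∩ H^1_0(a,b), the L^2 norm of u' is bounded by ((b-a)/π) times the L^2 norm of u''. -/
open Real MeasureTheory Set intervalIntegral

/-!
Integrating by parts, `‖u'‖² = -∫ u u'' ≤ ‖u‖ ‖u''‖`, so it suffices to know Wirtinger's
inequality `‖u‖ ≤ ((b - a) / π) ‖u'‖` for `u` vanishing at both endpoints.
For the latter, with `c = cot (k t + θ)` one has the pointwise identity
`u'² - k² u² = (u' - k u c)² + (k u² c)'` wherever `sin (k t + θ) ≠ 0`.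
For every `k < π / (b - a)` there is a `θ` keeping `k t + θ` inside `(0, π)` on `[a, b]`, and then
integrating the identity gives `k² ‖u‖² ≤ ‖u'‖²`, the boundary term vanishing with `u`.
-/

theorem sq_integral_mul_le_integral_sq_mul_integral_sq {α : Type*} [MeasurableSpace α]
    {μ : Measure α} {f g : α → ℝ} (hf : Integrable (fun x => f x ^ 2) μ)
    (hg : Integrable (fun x => g x ^ 2) μ) (hfg : Integrable (fun x => f x * g x) μ) :
    (∫ x, f x * g x ∂μ) ^ 2 ≤ (∫ x, f x ^ 2 ∂μ) * ∫ x, g x ^ 2 ∂μ := by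
  have hquad : ∀ s : ℝ, 0 ≤ (∫ x, g x ^ 2 ∂μ) * (s * s) + 2 * (∫ x, f x * g x ∂μ) * s +
      ∫ x, f x ^ 2 ∂μ := by
    intro s
    calc 0 ≤ ∫ x, (f x + s * g x) ^ 2 ∂μ := integral_nonneg fun x => sq_nonneg _
      _ = ∫ x, ((s * s) * g x ^ 2 + (2 * s) * (f x * g x) + f x ^ 2) ∂μ := by
          congr 1; ext x; ring
      _ = _ := by
          rw [integral_add ((hg.const_mul _).fun_add (hfg.const_mul _)) hf,
            integral_add (hg.const_mul _) (hfg.const_mul _), MeasureTheory.integral_const_mul,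
            MeasureTheory.integral_const_mul]
          ring
  have := discrim_le_zero hquad
  rw [discrim] at this
  linarith

theorem hasDerivAt_cos_div_sin_affine {k θ t : ℝ} (ht : sin (k * t + θ) ≠ 0) :
    HasDerivAt (fun s => cos (k * s + θ) / sin (k * s + θ))
      (-k * (1 + (cos (k * t + θ) / sin (k * t + θ)) ^ 2)) t := by
  have hlin : HasDerivAt (fun s => k * s + θ) k t := by
    simpa using ((hasDerivAt_id t).const_mul k).add_const θ
  refine (hlin.cos.div hlin.sin ht).congr_deriv ?_
  field_simp
  ring

theorem sq_mul_integral_sq_le_integral_deriv_sq_of_sin_ne_zero {a b k θ : ℝ} (hab : a ≤ b)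
    {u : ℝ → ℝ} (hu : ContDiff ℝ 1 u) (ha : u a = 0) (hb : u b = 0)
    (hsin : ∀ t ∈ Icc a b, sin (k * t + θ) ≠ 0) :
    k ^ 2 * ∫ t in a..b, u t ^ 2 ≤ ∫ t in a..b, deriv u t ^ 2 := by
  set c : ℝ → ℝ := fun t => cos (k * t + θ) / sin (k * t + θ)
  set dw : ℝ → ℝ := fun t =>
    2 * k * u t * deriv u t * c t - k ^ 2 * u t ^ 2 * (1 + c t ^ 2)
  rw [← uIcc_of_le hab] at hsin
  have hc : ∀ t ∈ uIcc a b, HasDerivAt c (-k * (1 + c t ^ 2)) t :=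
    fun t ht => hasDerivAt_cos_div_sin_affine (hsin t ht)
  have hc_cont : ContinuousOn c (uIcc a b) :=
    fun t ht => (hc t ht).continuousAt.continuousWithinAt
  have hu_cont : Continuous u := hu.continuous
  have hu'_cont : Continuous (deriv u) := hu.continuous_deriv le_rfl
  have hw : ∀ t ∈ uIcc a b, HasDerivAt (fun t => k * u t ^ 2 * c t) (dw t) t := by
    intro t ht
    have hu2 := ((hu.differentiable one_ne_zero t).hasDerivAt.fun_pow 2).const_mul k
    refine (hu2.mul (hc t ht)).congr_deriv ?_
    simp only [dw]
    ring
  have hdw_int : IntervalIntegrable dw volume a b := by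
    refine ContinuousOn.intervalIntegrable ?_
    simp only [dw]
    fun_prop (disch := assumption)
  have hsq_int : IntervalIntegrable (fun t => (deriv u t - k * u t * c t) ^ 2) volume a b := by
    refine ContinuousOn.intervalIntegrable ?_
    fun_prop (disch := assumption)
  have hdw : ∫ t in a..b, dw t = 0 := by
    rw [integral_eq_sub_of_hasDerivAt hw hdw_int, ha, hb]
    ring
  have hsq : 0 ≤ ∫ t in a..b, (deriv u t - k * u t * c t) ^ 2 :=
    integral_nonneg hab fun t _ => sq_nonneg _
  have hu2_int : IntervalIntegrable (fun t => k ^ 2 * u t ^ 2) volume a b :=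
    (by fun_prop : Continuous fun t => k ^ 2 * u t ^ 2).intervalIntegrable a b
  calc k ^ 2 * ∫ t in a..b, u t ^ 2
      ≤ k ^ 2 * (∫ t in a..b, u t ^ 2) + ∫ t in a..b, (deriv u t - k * u t * c t) ^ 2 :=
        le_add_of_nonneg_right hsq
    _ = k ^ 2 * (∫ t in a..b, u t ^ 2) + (∫ t in a..b, (deriv u t - k * u t * c t) ^ 2) +
          ∫ t in a..b, dw t := by rw [hdw, add_zero]
    _ = ∫ t in a..b, (k ^ 2 * u t ^ 2 + (deriv u t - k * u t * c t) ^ 2 + dw t) := by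
        rw [intervalIntegral.integral_add (hu2_int.add hsq_int) hdw_int,
          intervalIntegral.integral_add hu2_int hsq_int, intervalIntegral.integral_const_mul]
    _ = ∫ t in a..b, deriv u t ^ 2 := by
        congr 1
        ext t
        ring

theorem pi_div_sq_mul_integral_sq_le_integral_deriv_sq {a b : ℝ} (hab : a < b) {u : ℝ → ℝ}
    (hu : ContDiff ℝ 1 u) (ha : u a = 0) (hb : u b = 0) :
    (π / (b - a)) ^ 2 * ∫ t in a..b, u t ^ 2 ≤ ∫ t in a..b, deriv u t ^ 2 := by
  have hba : 0 < b - a := sub_pos.2 hab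
  have hcont : Continuous fun k : ℝ => k ^ 2 * ∫ t in a..b, u t ^ 2 := by fun_prop
  refine le_of_tendsto
    ((hcont.tendsto _).mono_left (nhdsWithin_le_nhds (s := Iio (π / (b - a))))) ?_
  filter_upwards [Ioo_mem_nhdsLT (div_pos pi_pos hba)] with k ⟨hk, hkπ⟩
  have hkba : k * (b - a) < π := (lt_div_iff₀ hba).1 hkπ
  refine sq_mul_integral_sq_le_integral_deriv_sq_of_sin_ne_zero (θ := π / 2 - k * (a + b) / 2)
    hab.le hu ha hb fun t ⟨hat, htb⟩ => (sin_pos_of_pos_of_lt_pi ?_ ?_).ne'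
  · nlinarith [mul_nonneg hk.le (sub_nonneg.2 hat)]
  · nlinarith [mul_nonneg hk.le (sub_nonneg.2 htb)]

theorem integral_deriv_sq_eq_neg_integral_mul_deriv_deriv {a b : ℝ} {u : ℝ → ℝ}
    (hu : ContDiff ℝ 2 u) (ha : u a = 0) (hb : u b = 0) :
    ∫ t in a..b, deriv u t ^ 2 = -∫ t in a..b, u t * deriv (deriv u) t := by
  have hu' : ContDiff ℝ 1 (deriv u) := hu.deriv'
  rw [integral_mul_deriv_eq_deriv_mul (fun t _ => (hu.differentiable two_ne_zero t).hasDerivAt)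
    (fun t _ => (hu'.differentiable one_ne_zero t).hasDerivAt)
    ((hu.continuous_deriv one_le_two).intervalIntegrable a b)
    ((hu'.continuous_deriv le_rfl).intervalIntegrable a b), ha, hb]
  simp [sq]

/-- For `u ∈ H²(a,b) ∩ H¹₀(a,b)`, `‖u'‖_{L²} ≤ ((b-a)/π) ‖u''‖_{L²}`. -/
theorem stmt_1 (a b : ℝ) (hab : a < b) (u : ℝ → ℝ)
    (hu : ContDiff ℝ 2 u) (ha : u a = 0) (hb : u b = 0) :
    Real.sqrt (∫ t in a..b, (deriv u t) ^ 2) ≤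
      ((b - a) / π) * Real.sqrt (∫ t in a..b, (deriv (deriv u) t) ^ 2) := by
  have hcs : (∫ t in a..b, u t * deriv (deriv u) t) ^ 2 ≤
      (∫ t in a..b, u t ^ 2) * ∫ t in a..b, deriv (deriv u) t ^ 2 := by
    have hu'' : Continuous (deriv (deriv u)) := hu.deriv'.continuous_deriv le_rfl
    simp only [integral_of_le hab.le]
    exact sq_integral_mul_le_integral_sq_mul_integral_sq
      ((hu.continuous.pow 2).intervalIntegrable a b).1
      ((hu''.pow 2).intervalIntegrable a b).1 ((hu.continuous.mul hu'').intervalIntegrable a b).1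
  have hparts := integral_deriv_sq_eq_neg_integral_mul_deriv_deriv hu ha hb
  have hwirt := pi_div_sq_mul_integral_sq_le_integral_deriv_sq hab (hu.of_le one_le_two) ha hb
  set k := π / (b - a) with hk_def
  set J := ∫ t in a..b, u t * deriv (deriv u) t
  set I₀ := ∫ t in a..b, u t ^ 2
  set I₁ := ∫ t in a..b, deriv u t ^ 2
  set I₂ := ∫ t in a..b, deriv (deriv u) t ^ 2
  have hI₁ : 0 ≤ I₁ := integral_nonneg hab.le fun t _ => sq_nonneg _
  have hI₂ : 0 ≤ I₂ := integral_nonneg hab.le fun t _ => sq_nonneg _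
  have hk : 0 < k := div_pos pi_pos (sub_pos.2 hab)
  have hkI : k ^ 2 * I₁ ≤ I₂ := by
    rcases hI₁.eq_or_lt with hI₁_zero | hI₁_pos
    · simpa [← hI₁_zero] using hI₂
    refine le_of_mul_le_mul_right ?_ hI₁_pos
    calc k ^ 2 * I₁ * I₁ = k ^ 2 * J ^ 2 := by rw [hparts]; ring
      _ ≤ k ^ 2 * (I₀ * I₂) := by gcongr
      _ = k ^ 2 * I₀ * I₂ := by ring
      _ ≤ I₁ * I₂ := by gcongr
      _ = I₂ * I₁ := mul_comm _ _
  calc √I₁ = (b - a) / π * √(k ^ 2 * I₁) := by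
        rw [sqrt_mul' _ hI₁, sqrt_sq hk.le, hk_def]
        field_simp [(sub_pos.2 hab).ne']
    _ ≤ (b - a) / π * √I₂ := by gcongr
end

section
/- Let p ≥ 0 and c ∈ C(I) with c_m := min_I c satisfying −(π/(b−a))⁴ − p(π/(b−a))² < c_m ≤ 0. If u ∈ C⁴(I) solves u⁗ − p u'' + c u = h on I with u(a)=u(b)=u''(a)=u''(b)=0, then ‖u'‖_{L^2(I)} ≤ (π/√(b−a)) · ‖h‖_{C(I)} / ((π/(b−a))⁴ + p(π/(b−a))² + c_m). -/
open Real MeasureTheory Set intervalIntegral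

/-!
Multiplying the equation by `u` and integrating by parts twice gives the energy inequality
`‖u''‖² + p ‖u'‖² + c_m ‖u‖² ≤ ‖h‖_∞ √(b - a) ‖u‖` (all norms in `L²(a, b)` except `‖h‖_∞`).
With `θ = π / (b - a)`, Wirtinger's inequality `θ ‖u‖ ≤ ‖u'‖` holds because the odd reflection
of `u` in `a` is a mean-zero function on an interval of length `2 (b - a)` taking equal values at
the ends, whose Fourier coefficients of index `n ≠ 0` are those of its derivative divided by
`2πin / (2 (b - a))`; Parseval then compares the two norms. Together with
`‖u'‖² = -∫ u u'' ≤ ‖u‖ ‖u''‖` it gives `θ ‖u'‖ ≤ ‖u''‖`. As `c_m ≤ 0`, the left side of the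
energy inequality is at least `(θ⁴ + p θ² + c_m) ‖u'‖² / θ²` and the right side at most
`‖h‖_∞ √(b - a) ‖u'‖ / θ`.
-/

theorem sq_integral_mul_le_mul_integral_sq {a b : ℝ} (hab : a ≤ b) {f g : ℝ → ℝ}
    (hf : IntervalIntegrable (fun t => f t ^ 2) volume a b)
    (hg : IntervalIntegrable (fun t => g t ^ 2) volume a b)
    (hfg : IntervalIntegrable (fun t => f t * g t) volume a b) :
    (∫ t in a..b, f t * g t) ^ 2 ≤ (∫ t in a..b, f t ^ 2) * ∫ t in a..b, g t ^ 2 := by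
  have hquad : ∀ x : ℝ, 0 ≤ (∫ t in a..b, f t ^ 2) * (x * x) + 2 * (∫ t in a..b, f t * g t) * x
      + ∫ t in a..b, g t ^ 2 := by
    intro x
    have hexp : (∫ t in a..b, (x * f t + g t) ^ 2) = ∫ t in a..b,
        ((x * x) * f t ^ 2 + (2 * x) * (f t * g t) + g t ^ 2) := by
      congr 1; ext t; ring
    rw [integral_add ((hf.const_mul _).add (hfg.const_mul _)) hg,
      integral_add (hf.const_mul _) (hfg.const_mul _), intervalIntegral.integral_const_mul,
      intervalIntegral.integral_const_mul] at hexp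
    linarith [hexp ▸ integral_nonneg hab fun t _ => sq_nonneg (x * f t + g t)]
  have hdisc := discrim_le_zero hquad
  rw [discrim] at hdisc
  linarith

theorem ContinuousOn.memLp_restrict_Ioc {E : Type*} [NormedAddCommGroup E] {a b : ℝ}
    {f : ℝ → E} (hf : ContinuousOn f (Icc a b)) (p : ENNReal) :
    MemLp f p (volume.restrict (Ioc a b)) := by
  obtain ⟨C, hC⟩ := isCompact_Icc.exists_bound_of_continuousOn hf
  exact MemLp.of_bound ((hf.mono Ioc_subset_Icc_self).aestronglyMeasurable measurableSet_Ioc) C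
    ((ae_restrict_iff' measurableSet_Ioc).2 (ae_of_all _ fun x hx => hC x (Ioc_subset_Icc_self hx)))

theorem norm_fourierCoeffOn_le_of_hasDerivAt {a b : ℝ} (hab : a < b) {f f' : ℝ → ℂ}
    (hf : ∀ x ∈ Icc a b, HasDerivAt f (f' x) x) (hf' : IntervalIntegrable f' volume a b)
    (hper : f a = f b) {n : ℤ} (hn : n ≠ 0) :
    ‖fourierCoeffOn hab f n‖ ≤ (b - a) / (2 * π) * ‖fourierCoeffOn hab f' n‖ := by
  rw [fourierCoeffOn_of_hasDerivAt hab hn (by rwa [uIcc_of_le hab.le]) hf', hper, sub_self,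
    mul_zero, zero_sub, ← Complex.ofReal_sub]
  simp only [norm_mul, norm_neg, norm_div, norm_one, Complex.norm_I, Complex.norm_real,
    Complex.norm_intCast, Complex.norm_ofNat, Real.norm_of_nonneg pi_pos.le,
    Real.norm_of_nonneg (sub_pos.2 hab).le, mul_one]
  have hn1 : (1 : ℝ) ≤ |(n : ℝ)| := by exact_mod_cast Int.one_le_abs hn
  calc 1 / (2 * π * |(n : ℝ)|) * ((b - a) * ‖fourierCoeffOn hab f' n‖)
      = (b - a) / (2 * π) * ‖fourierCoeffOn hab f' n‖ / |(n : ℝ)| := by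
        field_simp
    _ ≤ (b - a) / (2 * π) * ‖fourierCoeffOn hab f' n‖ :=
        div_le_self (by have := sub_pos.2 hab; positivity) hn1

theorem wirtinger_inequality_of_periodic {a b : ℝ} (hab : a < b) {f f' : ℝ → ℂ}
    (hf : ∀ x ∈ Icc a b, HasDerivAt f (f' x) x) (hf' : ContinuousOn f' (Icc a b))
    (hper : f a = f b) (hmean : ∫ x in a..b, f x = 0) :
    (2 * π / (b - a)) ^ 2 * ∫ x in a..b, ‖f x‖ ^ 2 ≤ ∫ x in a..b, ‖f' x‖ ^ 2 := by
  have hL : 0 < b - a := sub_pos.2 hab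
  have hfc : ContinuousOn f (Icc a b) := fun x hx => (hf x hx).continuousAt.continuousWithinAt
  have hcoeff : ∀ n : ℤ, ‖fourierCoeffOn hab f n‖ ^ 2
      ≤ ((b - a) / (2 * π)) ^ 2 * ‖fourierCoeffOn hab f' n‖ ^ 2 := by
    intro n
    rcases eq_or_ne n 0 with rfl | hn
    · have h0 : fourierCoeffOn hab f 0 = 0 := by simp [fourierCoeffOn_eq_integral, hmean]
      rw [h0, norm_zero, sq, zero_mul]
      positivity
    · rw [← mul_pow]
      gcongr
      exact norm_fourierCoeffOn_le_of_hasDerivAt hab hf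
        (hf'.intervalIntegrable_of_Icc hab.le) hper hn
  have hsum := hasSum_le hcoeff (hasSum_sq_fourierCoeffOn hab (hfc.memLp_restrict_Ioc 2))
    ((hasSum_sq_fourierCoeffOn hab (hf'.memLp_restrict_Ioc 2)).mul_left _)
  rw [smul_eq_mul, smul_eq_mul, mul_left_comm, mul_le_mul_iff_right₀ (inv_pos.2 hL)] at hsum
  calc (2 * π / (b - a)) ^ 2 * ∫ x in a..b, ‖f x‖ ^ 2
      ≤ (2 * π / (b - a)) ^ 2 * (((b - a) / (2 * π)) ^ 2 * ∫ x in a..b, ‖f' x‖ ^ 2) := by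
        gcongr
    _ = ∫ x in a..b, ‖f' x‖ ^ 2 := by
        field_simp

noncomputable def reflect (a : ℝ) (f g : ℝ → ℝ) (t : ℝ) : ℝ :=
  if a ≤ t then f t else g (2 * a - t)

section reflect

variable {a b : ℝ} {f g : ℝ → ℝ}

theorem apply_reflect (φ : ℝ → ℝ) (t : ℝ) :
    φ (reflect a f g t) = reflect a (fun s => φ (f s)) (fun s => φ (g s)) t := by
  unfold reflect; split_ifs <;> rfl

theorem eqOn_reflect_right : EqOn (reflect a f g) f (Ici a) := fun _ ht => if_pos ht

theorem eqOn_reflect_left (hfg : f a = g a) :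
    EqOn (reflect a f g) (fun t => g (2 * a - t)) (Iic a) := by
  intro t ht
  rcases (mem_Iic.1 ht).eq_or_lt with rfl | ht
  · simp [reflect, hfg, two_mul]
  · exact if_neg ht.not_ge

theorem integral_reflect (hab : a ≤ b) (hf : IntervalIntegrable f volume a b)
    (hg : IntervalIntegrable g volume a b) (hfg : f a = g a) :
    ∫ t in (2 * a - b)..b, reflect a f g t = (∫ t in a..b, f t) + ∫ t in a..b, g t := by
  have hleft : EqOn (reflect a f g) (fun t => g (2 * a - t)) (uIcc (2 * a - b) a) :=
    (eqOn_reflect_left hfg).mono fun t ht => by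
      rw [uIcc_of_le (by linarith)] at ht; exact ht.2
  have hright : EqOn (reflect a f g) f (uIcc a b) :=
    eqOn_reflect_right.mono fun t ht => by rw [uIcc_of_le hab] at ht; exact ht.1
  have hg' : IntervalIntegrable (fun t => g (2 * a - t)) volume (2 * a - b) a := by
    simpa [two_mul] using (hg.comp_sub_left (2 * a)).symm
  rw [← integral_add_adjacent_intervals (hg'.congr (hleft.symm.mono uIoc_subset_uIcc))
    (hf.congr (hright.symm.mono uIoc_subset_uIcc)), integral_congr hleft, integral_congr hright,
    integral_comp_sub_left, add_comm]
  congr 2 <;> ring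

theorem continuousOn_reflect (hab : a ≤ b) (hf : ContinuousOn f (Icc a b))
    (hg : ContinuousOn g (Icc a b)) (hfg : f a = g a) :
    ContinuousOn (reflect a f g) (Icc (2 * a - b) b) := by
  rw [← Icc_union_Icc_eq_Icc (by linarith) hab]
  refine ContinuousOn.union_of_isClosed ?_ (hf.congr (eqOn_reflect_right.mono fun t ht => ht.1))
    isClosed_Icc isClosed_Icc
  refine ContinuousOn.congr (hg.comp (f := fun t => 2 * a - t) (by fun_prop)
    fun t ht => ⟨?_, ?_⟩) ((eqOn_reflect_left hfg).mono fun t ht => ht.2) <;> linarith [ht.1, ht.2]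

theorem hasDerivAt_reflect_neg {u u' : ℝ → ℝ} (hu : ∀ x ∈ Icc a b, HasDerivAt u (u' x) x)
    (ha : u a = 0) {x : ℝ} (hx : x ∈ Icc (2 * a - b) b) :
    HasDerivAt (reflect a u fun s => -u s) (reflect a u' u' x) x := by
  have hleft : ∀ y ∈ Icc (2 * a - b) a,
      HasDerivAt (fun t => -u (2 * a - t)) (u' (2 * a - y)) y := by
    intro y hy
    simpa using ((hu (2 * a - y) ⟨by linarith [hy.2], by linarith [hy.1]⟩).comp_const_sub
      (2 * a) y).fun_neg
  rcases lt_trichotomy x a with hxa | rfl | hxa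
  · rw [eqOn_reflect_left (f := u') rfl (le_of_lt hxa)]
    exact (hleft x ⟨hx.1, hxa.le⟩).congr_of_eventuallyEq
      ((eqOn_reflect_left (by simp [ha])).eventuallyEq_of_mem (Iic_mem_nhds hxa))
  · have hright : HasDerivWithinAt (reflect x u fun s => -u s) (u' x) (Ici x) x :=
      (hu x ⟨le_rfl, by linarith [hx.1]⟩).hasDerivWithinAt.congr
        eqOn_reflect_right (eqOn_reflect_right self_mem_Ici)
    have hleft : HasDerivWithinAt (reflect x u fun s => -u s) (u' x) (Iic x) x := by
      have := (hleft x ⟨by linarith [hx.2], le_rfl⟩).hasDerivWithinAt (s := Iic x)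
      rw [show 2 * x - x = x by ring] at this
      exact this.congr (eqOn_reflect_left (by simp [ha])) (eqOn_reflect_left (by simp [ha])
        self_mem_Iic)
    rw [eqOn_reflect_right (f := u') self_mem_Ici, ← hasDerivWithinAt_univ, ← Iic_union_Ici]
    exact hleft.union hright
  · rw [eqOn_reflect_right (f := u') (le_of_lt hxa)]
    exact (hu x ⟨hxa.le, hx.2⟩).congr_of_eventuallyEq
      (eqOn_reflect_right.eventuallyEq_of_mem (Ici_mem_nhds hxa))

end reflect

theorem wirtinger_inequality_of_boundary_zero {a b : ℝ} (hab : a < b) {u u' : ℝ → ℝ}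
    (hu : ∀ x ∈ Icc a b, HasDerivAt u (u' x) x) (hu' : ContinuousOn u' (Icc a b))
    (ha : u a = 0) (hb : u b = 0) :
    (π / (b - a)) ^ 2 * ∫ t in a..b, u t ^ 2 ≤ ∫ t in a..b, u' t ^ 2 := by
  have huc : ContinuousOn u (Icc a b) := fun x hx => (hu x hx).continuousAt.continuousWithinAt
  have hper : reflect a u (fun s => -u s) (2 * a - b) = reflect a u (fun s => -u s) b := by
    simp [reflect, not_le.2 (by linarith : 2 * a - b < a), hab.le, hb]
  have hmean : ∫ t in (2 * a - b)..b, reflect a u (fun s => -u s) t = 0 := by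
    rw [integral_reflect (g := fun s => -u s) hab.le (huc.intervalIntegrable_of_Icc hab.le)
      (huc.neg.intervalIntegrable_of_Icc hab.le) (by simp [ha]), intervalIntegral.integral_neg,
      add_neg_cancel]
  have key := wirtinger_inequality_of_periodic (by linarith : 2 * a - b < b)
    (f := fun t => (reflect a u (fun s => -u s) t : ℂ)) (f' := fun t => (reflect a u' u' t : ℂ))
    (fun x hx => (hasDerivAt_reflect_neg hu ha hx).ofReal_comp)
    (Complex.continuous_ofReal.comp_continuousOn (continuousOn_reflect hab.le hu' hu' rfl))
    (congrArg _ hper) (by rw [intervalIntegral.integral_ofReal, hmean, Complex.ofReal_zero])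
  simp only [Complex.norm_real, Real.norm_eq_abs, sq_abs, apply_reflect (· ^ 2), neg_sq] at key
  have hsq : ∀ v : ℝ → ℝ, ContinuousOn v (Icc a b) →
      ∫ t in (2 * a - b)..b, reflect a (fun s => v s ^ 2) (fun s => v s ^ 2) t
        = 2 * ∫ t in a..b, v t ^ 2 := fun v hv => by
    have hv2 : IntervalIntegrable (fun s => v s ^ 2) volume a b :=
      (hv.pow 2).intervalIntegrable_of_Icc hab.le
    rw [integral_reflect (f := fun s => v s ^ 2) (g := fun s => v s ^ 2) hab.le hv2 hv2 rfl,
      two_mul]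
  rw [hsq u huc, hsq u' hu'] at key
  have hlen : 2 * π / (b - (2 * a - b)) = π / (b - a) := by
    rw [show b - (2 * a - b) = 2 * (b - a) by ring, mul_div_mul_left _ _ two_ne_zero]
  rw [hlen] at key
  linarith

theorem hasDerivAt_iteratedDeriv {𝕜 F : Type*} [NontriviallyNormedField 𝕜] [NormedAddCommGroup F]
    [NormedSpace 𝕜 F] {f : 𝕜 → F} {n k : ℕ} (hf : ContDiff 𝕜 n f) (hk : k < n) (x : 𝕜) :
    HasDerivAt (iteratedDeriv k f) (iteratedDeriv (k + 1) f x) x := by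
  rw [iteratedDeriv_succ]
  exact (hf.differentiable_iteratedDeriv k (by exact_mod_cast hk) x).hasDerivAt

section BoundaryValue

variable {a b : ℝ} {u : ℝ → ℝ}

theorem integral_mul_iteratedDeriv_two (hu : ContDiff ℝ 2 u) (ha : u a = 0) (hb : u b = 0) :
    ∫ t in a..b, u t * iteratedDeriv 2 u t = -∫ t in a..b, deriv u t ^ 2 := by
  have hibp := integral_mul_deriv_eq_deriv_mul (a := a) (b := b)
    (fun x _ => iteratedDeriv_zero (f := u) ▸ hasDerivAt_iteratedDeriv hu (k := 0) (by norm_num) x)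
    (fun x _ => hasDerivAt_iteratedDeriv hu (k := 1) (by norm_num) x)
    ((hu.continuous_iteratedDeriv 1 (by norm_num)).intervalIntegrable a b)
    ((hu.continuous_iteratedDeriv 2 (by norm_num)).intervalIntegrable a b)
  simpa [ha, hb, iteratedDeriv_one, sq] using hibp

theorem integral_mul_iteratedDeriv_four (hu : ContDiff ℝ 4 u) (ha : u a = 0) (hb : u b = 0)
    (ha'' : iteratedDeriv 2 u a = 0) (hb'' : iteratedDeriv 2 u b = 0) :
    ∫ t in a..b, u t * iteratedDeriv 4 u t = ∫ t in a..b, iteratedDeriv 2 u t ^ 2 := by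
  have hD : ∀ k < 4, ∀ x, HasDerivAt (iteratedDeriv k u) (iteratedDeriv (k + 1) u x) x :=
    fun k hk => hasDerivAt_iteratedDeriv hu (by exact_mod_cast hk)
  have hint : ∀ k ≤ 4, IntervalIntegrable (iteratedDeriv k u) volume a b :=
    fun k hk => (hu.continuous_iteratedDeriv k (by exact_mod_cast hk)).intervalIntegrable a b
  have hibp₁ := integral_mul_deriv_eq_deriv_mul (a := a) (b := b)
    (fun x _ => iteratedDeriv_zero (f := u) ▸ hD 0 (by norm_num) x)
    (fun x _ => hD 3 (by norm_num) x)
    (hint 1 (by norm_num)) (hint 4 le_rfl)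
  have hibp₂ := integral_mul_deriv_eq_deriv_mul (a := a) (b := b)
    (fun x _ => hD 1 (by norm_num) x) (fun x _ => hD 2 (by norm_num) x)
    (hint 2 (by norm_num)) (hint 3 (by norm_num))
  simp only [ha, hb, ha'', hb'', zero_mul, mul_zero, sub_zero, zero_sub] at hibp₁ hibp₂
  rw [hibp₁, hibp₂, neg_neg]
  simp [sq]

end BoundaryValue

theorem wirtinger_inequality_deriv_of_boundary_zero {a b : ℝ} (hab : a < b) {u : ℝ → ℝ}
    (hu : ContDiff ℝ 2 u) (ha : u a = 0) (hb : u b = 0) :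
    (π / (b - a)) ^ 2 * ∫ t in a..b, deriv u t ^ 2 ≤ ∫ t in a..b, iteratedDeriv 2 u t ^ 2 := by
  have hu' : Continuous (deriv u) := hu.continuous_deriv (by norm_num)
  have hu'' : Continuous (iteratedDeriv 2 u) := hu.continuous_iteratedDeriv 2 le_rfl
  have hW := wirtinger_inequality_of_boundary_zero hab
    (fun x _ => (hu.differentiable (by norm_num) x).hasDerivAt) hu'.continuousOn ha hb
  have hCS := sq_integral_mul_le_mul_integral_sq hab.le
    ((hu.continuous.pow 2).intervalIntegrable a b) ((hu''.pow 2).intervalIntegrable a b)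
    ((hu.continuous.mul hu'').intervalIntegrable a b)
  rw [integral_mul_iteratedDeriv_two hu ha hb, neg_sq] at hCS
  set θ := π / (b - a)
  set I0 := ∫ t in a..b, u t ^ 2
  set I1 := ∫ t in a..b, deriv u t ^ 2
  set I2 := ∫ t in a..b, iteratedDeriv 2 u t ^ 2
  have hI1 : 0 ≤ I1 := integral_nonneg hab.le fun t _ => sq_nonneg _
  have hI2 : 0 ≤ I2 := integral_nonneg hab.le fun t _ => sq_nonneg _
  have hmul : I1 * (θ ^ 2 * I1) ≤ I1 * I2 := calc
    I1 * (θ ^ 2 * I1) = θ ^ 2 * I1 ^ 2 := by ring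
    _ ≤ θ ^ 2 * (I0 * I2) := mul_le_mul_of_nonneg_left hCS (sq_nonneg θ)
    _ = θ ^ 2 * I0 * I2 := by ring
    _ ≤ I1 * I2 := mul_le_mul_of_nonneg_right hW hI2
  rcases hI1.eq_or_lt with hzero | hpos
  · rw [← hzero, mul_zero]
    exact hI2
  · exact le_of_mul_le_mul_left hmul hpos

theorem integral_abs_le_sqrt_mul_sqrt {a b : ℝ} (hab : a ≤ b) {u : ℝ → ℝ}
    (hu : ContinuousOn u (Icc a b)) :
    ∫ t in a..b, |u t| ≤ √(b - a) * √(∫ t in a..b, u t ^ 2) := by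
  have hCS := sq_integral_mul_le_mul_integral_sq hab (g := fun _ => 1)
    ((hu.abs.pow 2).intervalIntegrable_of_Icc hab) intervalIntegrable_const
    ((hu.abs.mul continuousOn_const).intervalIntegrable_of_Icc hab)
  simp only [mul_one, one_pow, sq_abs, intervalIntegral.integral_const, smul_eq_mul] at hCS
  rw [← Real.sqrt_mul (sub_nonneg.2 hab), mul_comm]
  exact (le_abs_self _).trans (Real.abs_le_sqrt hCS)

theorem abs_le_sSup_abs_image {a b : ℝ} {h : ℝ → ℝ} (hh : ContinuousOn h (Icc a b)) {t : ℝ}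
    (ht : t ∈ Icc a b) : |h t| ≤ sSup ((fun t => |h t|) '' Icc a b) :=
  le_csSup (isCompact_Icc.bddAbove_image hh.abs) ⟨t, ht, rfl⟩

theorem integral_mul_le_sSup_abs_mul {a b : ℝ} (hab : a ≤ b) {u h : ℝ → ℝ}
    (hu : ContinuousOn u (Icc a b)) (hh : ContinuousOn h (Icc a b)) :
    ∫ t in a..b, u t * h t
      ≤ sSup ((fun t => |h t|) '' Icc a b) * √(b - a) * √(∫ t in a..b, u t ^ 2) := by
  set M := sSup ((fun t => |h t|) '' Icc a b)
  have hM : 0 ≤ M := (abs_nonneg _).trans (abs_le_sSup_abs_image hh (left_mem_Icc.2 hab))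
  calc ∫ t in a..b, u t * h t ≤ ∫ t in a..b, M * |u t| := by
        refine integral_mono_on hab ((hu.mul hh).intervalIntegrable_of_Icc hab)
          ((continuousOn_const.mul hu.abs).intervalIntegrable_of_Icc hab) fun t ht => ?_
        calc u t * h t ≤ |u t| * |h t| := (le_abs_self _).trans (abs_mul _ _).le
          _ ≤ |u t| * M := mul_le_mul_of_nonneg_left (abs_le_sSup_abs_image hh ht) (abs_nonneg _)
          _ = M * |u t| := mul_comm _ _
    _ = M * ∫ t in a..b, |u t| := intervalIntegral.integral_const_mul _ _
    _ ≤ M * √(b - a) * √(∫ t in a..b, u t ^ 2) := by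
        rw [mul_assoc]
        exact mul_le_mul_of_nonneg_left (integral_abs_le_sqrt_mul_sqrt hab hu) hM

theorem energy_le_of_boundary_value_problem {a b p cm : ℝ} (hab : a ≤ b) {c h u : ℝ → ℝ}
    (hc : ContinuousOn c (Icc a b)) (hh : ContinuousOn h (Icc a b))
    (hcm : ∀ t ∈ Icc a b, cm ≤ c t) (hu : ContDiff ℝ 4 u)
    (heq : ∀ t ∈ Icc a b, iteratedDeriv 4 u t - p * iteratedDeriv 2 u t + c t * u t = h t)
    (ha : u a = 0) (hb : u b = 0)
    (ha'' : iteratedDeriv 2 u a = 0) (hb'' : iteratedDeriv 2 u b = 0) :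
    (∫ t in a..b, iteratedDeriv 2 u t ^ 2) + p * (∫ t in a..b, deriv u t ^ 2)
        + cm * ∫ t in a..b, u t ^ 2
      ≤ sSup ((fun t => |h t|) '' Icc a b) * √(b - a) * √(∫ t in a..b, u t ^ 2) := by
  have huc : Continuous u := hu.continuous
  have hint : ∀ k ≤ 4, IntervalIntegrable (fun t => u t * iteratedDeriv k u t) volume a b :=
    fun k hk =>
      (huc.mul (hu.continuous_iteratedDeriv k (by exact_mod_cast hk))).intervalIntegrable a b
  have hcu : IntervalIntegrable (fun t => c t * u t ^ 2) volume a b :=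
    (hc.mul (huc.pow 2).continuousOn).intervalIntegrable_of_Icc hab
  have hidentity : ∫ t in a..b, u t * h t = (∫ t in a..b, u t * iteratedDeriv 4 u t)
      - p * (∫ t in a..b, u t * iteratedDeriv 2 u t) + ∫ t in a..b, c t * u t ^ 2 := by
    rw [← intervalIntegral.integral_const_mul, ← integral_sub (hint 4 le_rfl)
      ((hint 2 (by norm_num)).const_mul p), ← integral_add (((hint 4 le_rfl)).sub
      ((hint 2 (by norm_num)).const_mul p)) hcu]
    refine integral_congr fun t ht => ?_
    rw [uIcc_of_le hab] at ht
    simp only [← heq t ht]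
    ring
  calc (∫ t in a..b, iteratedDeriv 2 u t ^ 2) + p * (∫ t in a..b, deriv u t ^ 2)
        + cm * ∫ t in a..b, u t ^ 2
      = (∫ t in a..b, u t * iteratedDeriv 4 u t) - p * (∫ t in a..b, u t * iteratedDeriv 2 u t)
        + ∫ t in a..b, cm * u t ^ 2 := by
        rw [integral_mul_iteratedDeriv_four hu ha hb ha'' hb'',
          integral_mul_iteratedDeriv_two (hu.of_le (by norm_num)) ha hb,
          intervalIntegral.integral_const_mul]
        ring
    _ ≤ (∫ t in a..b, u t * iteratedDeriv 4 u t) - p * (∫ t in a..b, u t * iteratedDeriv 2 u t)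
        + ∫ t in a..b, c t * u t ^ 2 := by
        gcongr
        exact integral_mono_on hab
          ((continuousOn_const.mul (huc.pow 2).continuousOn).intervalIntegrable_of_Icc hab) hcu
          fun t ht => mul_le_mul_of_nonneg_right (hcm t ht) (sq_nonneg _)
    _ = ∫ t in a..b, u t * h t := hidentity.symm
    _ ≤ _ := integral_mul_le_sSup_abs_mul hab huc.continuousOn hh

theorem sqrt_le_of_energy_le {θ p cm A I₀ I₁ I₂ : ℝ} (hθ : 0 < θ) (hcm : cm ≤ 0)
    (hK : 0 < θ ^ 4 + p * θ ^ 2 + cm) (hA : 0 ≤ A) (hI₀ : 0 ≤ I₀)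
    (hI₀₁ : θ ^ 2 * I₀ ≤ I₁) (hI₁₂ : θ ^ 2 * I₁ ≤ I₂) (hE : I₂ + p * I₁ + cm * I₀ ≤ A * √I₀) :
    √I₁ ≤ θ * A / (θ ^ 4 + p * θ ^ 2 + cm) := by
  set K := θ ^ 4 + p * θ ^ 2 + cm
  have hI₁ : 0 ≤ I₁ := (mul_nonneg (sq_nonneg θ) hI₀).trans hI₀₁
  have hy : θ * √I₀ ≤ √I₁ := by
    rw [← Real.sqrt_sq hθ.le, ← Real.sqrt_mul (sq_nonneg θ)]
    exact Real.sqrt_le_sqrt hI₀₁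
  have hKy : K * √I₁ * √I₁ ≤ θ * A * √I₁ := calc
    K * √I₁ * √I₁ = K * I₁ := by rw [mul_assoc, Real.mul_self_sqrt hI₁]
    _ ≤ θ ^ 2 * (I₂ + p * I₁ + cm * I₀) := by
        nlinarith [mul_le_mul_of_nonneg_left hI₁₂ (sq_nonneg θ), mul_le_mul_of_nonpos_left hI₀₁ hcm]
    _ ≤ θ ^ 2 * (A * √I₀) := mul_le_mul_of_nonneg_left hE (sq_nonneg θ)
    _ = θ * A * (θ * √I₀) := by ring
    _ ≤ θ * A * √I₁ := mul_le_mul_of_nonneg_left hy (mul_nonneg hθ.le hA)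
  rw [le_div_iff₀ hK]
  rcases (Real.sqrt_nonneg I₁).eq_or_lt with hzero | hpos
  · rw [← hzero, zero_mul]
    exact mul_nonneg hθ.le hA
  · rw [mul_comm]
    exact le_of_mul_le_mul_right hKy hpos

theorem stmt_9_general (a b p : ℝ) (hab : a < b) (c h : ℝ → ℝ)
    (hc : ContinuousOn c (Set.Icc a b)) (hh : ContinuousOn h (Set.Icc a b))
    (cm : ℝ) (hcm : IsLeast (c '' Set.Icc a b) cm)
    (hcm1 : -(π / (b - a)) ^ 4 - p * (π / (b - a)) ^ 2 < cm) (hcm2 : cm ≤ 0)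
    (u : ℝ → ℝ) (hu : ContDiff ℝ 4 u)
    (heq : ∀ t ∈ Set.Icc a b,
      iteratedDeriv 4 u t - p * iteratedDeriv 2 u t + c t * u t = h t)
    (hua : u a = 0) (hub : u b = 0)
    (hua'' : iteratedDeriv 2 u a = 0) (hub'' : iteratedDeriv 2 u b = 0) :
    Real.sqrt (∫ t in a..b, (deriv u t) ^ 2) ≤
      (π / Real.sqrt (b - a)) *
        sSup ((fun t => |h t|) '' Set.Icc a b) /
          ((π / (b - a)) ^ 4 + p * (π / (b - a)) ^ 2 + cm) := by
  have hu₂ : ContDiff ℝ 2 u := hu.of_le (by norm_num)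
  have hM : 0 ≤ sSup ((fun t => |h t|) '' Icc a b) :=
    (abs_nonneg _).trans (abs_le_sSup_abs_image hh (left_mem_Icc.2 hab.le))
  have hbound := sqrt_le_of_energy_le (div_pos pi_pos (sub_pos.2 hab)) hcm2 (by linarith)
    (mul_nonneg hM (Real.sqrt_nonneg _)) (integral_nonneg hab.le fun t _ => sq_nonneg (u t))
    (wirtinger_inequality_of_boundary_zero hab
      (fun x _ => (hu₂.differentiable (by norm_num) x).hasDerivAt)
      (hu₂.continuous_deriv (by norm_num)).continuousOn hua hub)
    (wirtinger_inequality_deriv_of_boundary_zero hab hu₂ hua hub)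
    (energy_le_of_boundary_value_problem hab.le hc hh (fun t ht => hcm.2 ⟨t, ht, rfl⟩) hu heq
      hua hub hua'' hub'')
  have hconst : π / (b - a) * √(b - a) = π / √(b - a) := by
    rw [div_mul_eq_mul_div, mul_div_assoc, Real.sqrt_div_self', mul_one_div]
  calc _ ≤ _ := hbound
    _ = _ := by rw [← hconst]; ring

/-- A priori `L²` gradient bound for solutions of
`u⁗ - p u'' + c u = h`, `u(a)=u(b)=u''(a)=u''(b)=0`, when
`-(π/(b-a))⁴ - p(π/(b-a))² < c_m := min_I c ≤ 0`. -/
theorem stmt_9 (a b p : ℝ) (hab : a < b) (hp : 0 ≤ p) (c h : ℝ → ℝ)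
    (hc : ContinuousOn c (Set.Icc a b)) (hh : ContinuousOn h (Set.Icc a b))
    (cm : ℝ) (hcm : IsLeast (c '' Set.Icc a b) cm)
    (hcm1 : -(π / (b - a)) ^ 4 - p * (π / (b - a)) ^ 2 < cm) (hcm2 : cm ≤ 0)
    (u : ℝ → ℝ) (hu : ContDiff ℝ 4 u)
    (heq : ∀ t ∈ Set.Icc a b,
      iteratedDeriv 4 u t - p * iteratedDeriv 2 u t + c t * u t = h t)
    (hua : u a = 0) (hub : u b = 0)
    (hua'' : iteratedDeriv 2 u a = 0) (hub'' : iteratedDeriv 2 u b = 0) :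
    Real.sqrt (∫ t in a..b, (deriv u t) ^ 2) ≤
      (π / Real.sqrt (b - a)) *
        sSup ((fun t => |h t|) '' Set.Icc a b) /
          ((π / (b - a)) ^ 4 + p * (π / (b - a)) ^ 2 + cm) :=
  stmt_9_general a b p hab c h hc hh cm hcm hcm1 hcm2 u hu heq hua hub hua'' hub''
end

section
/- Under the same hypotheses (p ≥ 0, −(π/(b−a))⁴ − p(π/(b−a))² < c_m ≤ 0, u a classical solution of u⁗ − p u'' + c u = h with simply supported homogeneous boundary conditions), the sup-norm bound ‖u‖_{C(I)} ≤ (π/2) ‖h‖_{C(I)} / ((π/(b−a))⁴ + p(π/(b−a))² + c_m) holds. -/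
/-!
Multiplying the equation by `u` and integrating by parts gives the energy inequality
`‖u''‖² + p ‖u'‖² + c_m ‖u‖² ≤ ‖h‖_C ‖u‖_{L¹}` (norms in `L²(a, b)` unless indicated).
With `ω = π / (b - a)`, Wirtinger's inequality `ω² ‖u‖² ≤ ‖u'‖²` and
`‖u'‖² = -⟨u'', u⟩ ≤ ‖u''‖ ‖u‖` give `ω² ‖u'‖² ≤ ‖u''‖²`; since `c_m ≤ 0`, the energy inequality
becomes `D ‖u'‖² ≤ ω² ‖h‖_C ‖u‖_{L¹}` with `D = ω⁴ + p ω² + c_m`. Bounding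
`‖u‖_{L¹} ≤ √(b - a) ‖u‖ ≤ √(b - a) ‖u'‖ / ω` yields `‖u'‖ ≤ π ‖h‖_C / (√(b - a) D)`, and
`2 |u t| ≤ ‖u'‖_{L¹} ≤ √(b - a) ‖u'‖` because `u` vanishes at both ends.
-/

open Real MeasureTheory Set intervalIntegral Filter Topology

theorem sq_intervalIntegral_mul_le {a b : ℝ} (hab : a ≤ b) {f g : ℝ → ℝ}
    (hf : ContinuousOn f (Icc a b)) (hg : ContinuousOn g (Icc a b)) :
    (∫ t in a..b, f t * g t) ^ 2 ≤ (∫ t in a..b, f t ^ 2) * ∫ t in a..b, g t ^ 2 := by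
  have hf2 : IntervalIntegrable (fun t => f t ^ 2) volume a b :=
    (hf.pow 2).intervalIntegrable_of_Icc hab
  have hg2 : IntervalIntegrable (fun t => g t ^ 2) volume a b :=
    (hg.pow 2).intervalIntegrable_of_Icc hab
  have hfg : IntervalIntegrable (fun t => f t * g t) volume a b :=
    (hf.mul hg).intervalIntegrable_of_Icc hab
  -- `∫ (f + x g)² ≥ 0` for every `x`, so the discriminant of this quadratic in `x` is nonpositive.
  have hquad : ∀ x : ℝ, 0 ≤ (∫ t in a..b, g t ^ 2) * (x * x)
      + 2 * (∫ t in a..b, f t * g t) * x + ∫ t in a..b, f t ^ 2 := by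
    intro x
    have hexpand : ∫ t in a..b, (f t + x * g t) ^ 2 = ∫ t in a..b,
        (f t ^ 2 + (2 * x) * (f t * g t) + (x * x) * g t ^ 2) :=
      integral_congr fun t _ => by ring
    rw [integral_add (hf2.add (hfg.const_mul _)) (hg2.const_mul _),
      integral_add hf2 (hfg.const_mul _), intervalIntegral.integral_const_mul,
      intervalIntegral.integral_const_mul] at hexpand
    have := integral_nonneg (μ := volume) hab fun t _ => sq_nonneg (f t + x * g t)
    linarith
  have := discrim_le_zero hquad
  rw [discrim] at this
  linarith

theorem sq_intervalIntegral_abs_le {a b : ℝ} (hab : a ≤ b) {f : ℝ → ℝ}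
    (hf : ContinuousOn f (Icc a b)) :
    (∫ t in a..b, |f t|) ^ 2 ≤ (b - a) * ∫ t in a..b, f t ^ 2 := by
  simpa [sq_abs, mul_comm] using sq_intervalIntegral_mul_le hab hf.abs continuousOn_const (g := 1)

theorem tendsto_div_of_hasDerivAt_of_eq_zero {f g : ℝ → ℝ} {f' g' x : ℝ}
    (hf : HasDerivAt f f' x) (hg : HasDerivAt g g' x) (hfx : f x = 0) (hgx : g x = 0)
    (hg' : g' ≠ 0) : Tendsto (fun t => f t / g t) (𝓝[≠] x) (𝓝 (f' / g')) := by
  refine ((hasDerivAt_iff_tendsto_slope.1 hf).div (hasDerivAt_iff_tendsto_slope.1 hg) hg').congr'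
    (eventually_nhdsWithin_of_forall fun t ht => ?_)
  have : t - x ≠ 0 := sub_ne_zero.2 ht
  simp only [Pi.div_apply, slope_def_field, hfx, hgx, sub_zero]
  field_simp

theorem continuousAt_sq_div_of_hasDerivAt {f g : ℝ → ℝ} {f' g' x : ℝ}
    (hf : HasDerivAt f f' x) (hg : HasDerivAt g g' x) (hfx : f x = 0) (hgx : g x = 0)
    (hg' : g' ≠ 0) : ContinuousAt (fun t => f t ^ 2 / g t) x := by
  rw [← continuousWithinAt_compl_self, ContinuousWithinAt]
  have := (hf.continuousAt.tendsto.mono_left nhdsWithin_le_nhds).mul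
    (tendsto_div_of_hasDerivAt_of_eq_zero hf hg hfx hgx hg')
  simp only [hfx, hgx, zero_mul, div_zero] at this ⊢
  exact this.congr fun t => by ring

-- `W = ω cot(ω (t - a)) f²` satisfies `W' = f'² - ω² f² - (f' - ω cot(ω (t - a)) f)²` and vanishes
-- at both ends, where `f` and `sin (ω (t - a))` have simple zeros.
theorem sq_pi_div_mul_integral_sq_le_integral_deriv_sq {a b : ℝ} (hab : a < b) {f f' : ℝ → ℝ}
    (hf : ∀ x ∈ Icc a b, HasDerivAt f (f' x) x) (hf' : ContinuousOn f' (Icc a b))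
    (ha : f a = 0) (hb : f b = 0) :
    (π / (b - a)) ^ 2 * ∫ t in a..b, f t ^ 2 ≤ ∫ t in a..b, f' t ^ 2 := by
  set ω := π / (b - a)
  have hω0 : 0 < ω := div_pos pi_pos (sub_pos.2 hab)
  have hωba : ω * (b - a) = π := div_mul_cancel₀ π (sub_pos.2 hab).ne'
  have hθ : ∀ t, HasDerivAt (fun t => ω * (t - a)) ω t := fun t => by
    simpa using ((hasDerivAt_id t).sub_const a).const_mul ω
  have hsin : ∀ t, HasDerivAt (fun t => sin (ω * (t - a))) (cos (ω * (t - a)) * ω) t :=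
    fun t => (hasDerivAt_sin _).comp t (hθ t)
  have hfc : ContinuousOn f (Icc a b) := fun x hx => (hf x hx).continuousAt.continuousWithinAt
  set W : ℝ → ℝ := fun t => ω * cos (ω * (t - a)) * (f t ^ 2 / sin (ω * (t - a)))
  have hWa : W a = 0 := by simp [W]
  have hWb : W b = 0 := by simp [W, hωba]
  have hsin_pos : ∀ t ∈ Ioo a b, 0 < sin (ω * (t - a)) := fun t ht =>
    sin_pos_of_pos_of_lt_pi (mul_pos hω0 (sub_pos.2 ht.1))
      (hωba ▸ mul_lt_mul_of_pos_left (by linarith [ht.2]) hω0)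
  have hWcont : ContinuousOn W (Icc a b) := by
    refine fun x hx => ContinuousAt.continuousWithinAt ?_
    refine (continuousAt_const.mul (hθ x).cos.continuousAt).mul ?_
    rcases eq_endpoints_or_mem_Ioo_of_mem_Icc hx with rfl | rfl | hx'
    · exact continuousAt_sq_div_of_hasDerivAt (hf x hx) (hsin x) ha (by simp) (by simp [hω0.ne'])
    · exact continuousAt_sq_div_of_hasDerivAt (hf x hx) (hsin x) hb (by simp [hωba])
        (by simp [hωba, hω0.ne'])
    · exact ((hf x hx).continuousAt.pow 2).div (hsin x).continuousAt (hsin_pos x hx').ne'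
  have hWderiv : ∀ t ∈ Ioo a b, HasDerivAt W (f' t ^ 2 - ω ^ 2 * f t ^ 2
      - (f' t - ω * cos (ω * (t - a)) / sin (ω * (t - a)) * f t) ^ 2) t := by
    intro t ht
    have hs := (hsin_pos t ht).ne'
    have := ((hθ t).cos.const_mul ω).mul (((hf t (Ioo_subset_Icc_self ht)).pow 2).div (hsin t) hs)
    refine this.congr_deriv ?_
    simp only [Pi.div_apply, Pi.pow_apply]
    field_simp
    ring
  have hf'2 : IntervalIntegrable (fun t => f' t ^ 2) volume a b :=
    (hf'.pow 2).intervalIntegrable_of_Icc hab.le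
  have hf2 : IntervalIntegrable (fun t => ω ^ 2 * f t ^ 2) volume a b :=
    (continuousOn_const.mul (hfc.pow 2)).intervalIntegrable_of_Icc hab.le
  have := sub_le_integral_of_hasDeriv_right_of_le hab.le hWcont
    (fun t ht => (hWderiv t ht).hasDerivWithinAt)
    ((intervalIntegrable_iff_integrableOn_Icc_of_le hab.le).1 (hf'2.sub hf2))
    (fun t _ => sub_le_self _ (sq_nonneg _))
  rw [hWa, hWb, integral_sub hf'2 hf2, intervalIntegral.integral_const_mul] at this
  linarith

theorem ContDiff.hasDerivAt_iteratedDeriv {u : ℝ → ℝ} {n k : ℕ} (hu : ContDiff ℝ n u)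
    (hk : k < n) (t : ℝ) : HasDerivAt (iteratedDeriv k u) (iteratedDeriv (k + 1) u t) t := by
  rw [iteratedDeriv_succ]
  exact (hu.differentiable_iteratedDeriv k (mod_cast hk) t).hasDerivAt

theorem integral_iteratedDeriv_succ_mul_eq_neg {u : ℝ → ℝ} {n k l : ℕ} {a b : ℝ}
    (hu : ContDiff ℝ n u) (hk : k < n) (hl : l < n)
    (ha : iteratedDeriv k u a * iteratedDeriv l u a = 0)
    (hb : iteratedDeriv k u b * iteratedDeriv l u b = 0) :
    ∫ t in a..b, iteratedDeriv (k + 1) u t * iteratedDeriv l u t =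
      -∫ t in a..b, iteratedDeriv k u t * iteratedDeriv (l + 1) u t := by
  have := integral_mul_deriv_eq_deriv_mul (a := a) (b := b)
    (fun t _ => hu.hasDerivAt_iteratedDeriv hk t) (fun t _ => hu.hasDerivAt_iteratedDeriv hl t)
    ((hu.continuous_iteratedDeriv (k + 1) (mod_cast hk)).intervalIntegrable _ _)
    ((hu.continuous_iteratedDeriv (l + 1) (mod_cast hl)).intervalIntegrable _ _)
  rw [ha, hb] at this
  linarith

theorem integral_iteratedDeriv_two_mul_self {u : ℝ → ℝ} {a b : ℝ} (hu : ContDiff ℝ 2 u)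
    (ha : u a = 0) (hb : u b = 0) :
    ∫ t in a..b, iteratedDeriv 2 u t * u t = -∫ t in a..b, iteratedDeriv 1 u t ^ 2 := by
  simpa [sq] using integral_iteratedDeriv_succ_mul_eq_neg (a := a) (b := b) (k := 1) (l := 0) hu
    (by norm_num) (by norm_num) (by simp [ha]) (by simp [hb])

theorem integral_iteratedDeriv_four_mul_self {u : ℝ → ℝ} {a b : ℝ} (hu : ContDiff ℝ 4 u)
    (ha : u a = 0) (hb : u b = 0) (ha'' : iteratedDeriv 2 u a = 0)
    (hb'' : iteratedDeriv 2 u b = 0) :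
    ∫ t in a..b, iteratedDeriv 4 u t * u t = ∫ t in a..b, iteratedDeriv 2 u t ^ 2 := by
  have h40 := integral_iteratedDeriv_succ_mul_eq_neg (a := a) (b := b) (k := 3) (l := 0) hu
    (by norm_num) (by norm_num) (by simp [ha]) (by simp [hb])
  have h31 := integral_iteratedDeriv_succ_mul_eq_neg (a := a) (b := b) (k := 2) (l := 1) hu
    (by norm_num) (by norm_num) (by simp [ha'']) (by simp [hb''])
  simp only [iteratedDeriv_zero] at h40
  simp only [h40, h31, neg_neg, sq]

theorem beam_energy_le {a b p cm M : ℝ} {c h u : ℝ → ℝ} (hab : a ≤ b)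
    (hc : ContinuousOn c (Icc a b)) (hh : ContinuousOn h (Icc a b))
    (hcm : ∀ t ∈ Icc a b, cm ≤ c t) (hM : ∀ t ∈ Icc a b, |h t| ≤ M) (hu : ContDiff ℝ 4 u)
    (heq : ∀ t ∈ Icc a b, iteratedDeriv 4 u t - p * iteratedDeriv 2 u t + c t * u t = h t)
    (ha : u a = 0) (hb : u b = 0) (ha'' : iteratedDeriv 2 u a = 0)
    (hb'' : iteratedDeriv 2 u b = 0) :
    (∫ t in a..b, iteratedDeriv 2 u t ^ 2) + p * (∫ t in a..b, iteratedDeriv 1 u t ^ 2)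
      + cm * (∫ t in a..b, u t ^ 2) ≤ M * ∫ t in a..b, |u t| := by
  have hu0 : Continuous u := hu.continuous
  have hu2 : Continuous (iteratedDeriv 2 u) := hu.continuous_iteratedDeriv 2 (by norm_num)
  have hu4 : Continuous (iteratedDeriv 4 u) := hu.continuous_iteratedDeriv 4 le_rfl
  have hcu : ContinuousOn (fun t => c t * u t ^ 2) (Icc a b) := hc.mul (hu0.pow 2).continuousOn
  have h4 : IntervalIntegrable (fun t => iteratedDeriv 4 u t * u t) volume a b :=
    (hu4.mul hu0).intervalIntegrable _ _
  have h2 : IntervalIntegrable (fun t => p * (iteratedDeriv 2 u t * u t)) volume a b :=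
    (continuous_const.mul (hu2.mul hu0)).intervalIntegrable _ _
  have hsplit : ∫ t in a..b, h t * u t = (∫ t in a..b, iteratedDeriv 4 u t * u t)
      - p * (∫ t in a..b, iteratedDeriv 2 u t * u t) + ∫ t in a..b, c t * u t ^ 2 := by
    rw [← intervalIntegral.integral_const_mul, ← integral_sub h4 h2,
      ← integral_add (h4.sub h2) (hcu.intervalIntegrable_of_Icc hab)]
    refine integral_congr fun t ht => ?_
    rw [uIcc_of_le hab] at ht
    simp only [← heq t ht]
    ring
  have hcu_ge : cm * (∫ t in a..b, u t ^ 2) ≤ ∫ t in a..b, c t * u t ^ 2 := by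
    rw [← intervalIntegral.integral_const_mul]
    exact integral_mono_on hab ((continuous_const.mul (hu0.pow 2)).intervalIntegrable _ _)
      (hcu.intervalIntegrable_of_Icc hab)
      fun t ht => mul_le_mul_of_nonneg_right (hcm t ht) (sq_nonneg _)
  have hhu_le : ∫ t in a..b, h t * u t ≤ M * ∫ t in a..b, |u t| := by
    rw [← intervalIntegral.integral_const_mul]
    refine integral_mono_on hab ((hh.mul hu0.continuousOn).intervalIntegrable_of_Icc hab)
      ((continuous_const.mul hu0.abs).intervalIntegrable _ _) fun t ht => ?_
    calc h t * u t ≤ |h t| * |u t| := (le_abs_self _).trans (abs_mul _ _).le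
      _ ≤ M * |u t| := mul_le_mul_of_nonneg_right (hM t ht) (abs_nonneg _)
  rw [integral_iteratedDeriv_four_mul_self hu ha hb ha'' hb'',
    integral_iteratedDeriv_two_mul_self (hu.of_le (by norm_num)) ha hb] at hsplit
  linarith

theorem sq_mul_integral_sq_deriv_le_of_energy_le {a b p cm M : ℝ} {u : ℝ → ℝ} (hab : a < b)
    (hD : 0 ≤ (π / (b - a)) ^ 4 + p * (π / (b - a)) ^ 2 + cm) (hcm : cm ≤ 0)
    (hu : ContDiff ℝ 2 u) (ha : u a = 0) (hb : u b = 0)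
    (henergy : (∫ t in a..b, iteratedDeriv 2 u t ^ 2) + p * (∫ t in a..b, iteratedDeriv 1 u t ^ 2)
      + cm * (∫ t in a..b, u t ^ 2) ≤ M * ∫ t in a..b, |u t|) :
    ((π / (b - a)) ^ 4 + p * (π / (b - a)) ^ 2 + cm) ^ 2
      * ((b - a) * ∫ t in a..b, iteratedDeriv 1 u t ^ 2) ≤ (π * M) ^ 2 := by
  set ω := π / (b - a) with hω
  set D := ω ^ 4 + p * ω ^ 2 + cm
  set A := ∫ t in a..b, u t ^ 2
  set B := ∫ t in a..b, iteratedDeriv 1 u t ^ 2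
  set C := ∫ t in a..b, iteratedDeriv 2 u t ^ 2
  set I := ∫ t in a..b, |u t|
  have hu0 : Continuous u := hu.continuous
  have hu1 : Continuous (iteratedDeriv 1 u) := hu.continuous_iteratedDeriv 1 (by norm_num)
  have hu2 : Continuous (iteratedDeriv 2 u) := hu.continuous_iteratedDeriv 2 le_rfl
  have hA : 0 ≤ A := integral_nonneg hab.le fun t _ => sq_nonneg _
  have hC : 0 ≤ C := integral_nonneg hab.le fun t _ => sq_nonneg _
  have hwirt : ω ^ 2 * A ≤ B := sq_pi_div_mul_integral_sq_le_integral_deriv_sq hab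
    (fun t _ => iteratedDeriv_one (f := u) ▸ (hu.differentiable (by norm_num) t).hasDerivAt)
    hu1.continuousOn ha hb
  have hB : 0 ≤ B := (by positivity : 0 ≤ ω ^ 2 * A).trans hwirt
  have hcs : B ^ 2 ≤ C * A := by
    have := sq_intervalIntegral_mul_le hab.le hu2.continuousOn hu0.continuousOn
    rwa [integral_iteratedDeriv_two_mul_self hu ha hb, neg_sq] at this
  have hI : I ^ 2 ≤ (b - a) * A := sq_intervalIntegral_abs_le hab.le hu0.continuousOn
  -- `u'` need not vanish at the ends, but `ω² A B ≤ B² = (∫ u'' u)² ≤ C A`.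
  have hωB : ω ^ 2 * B ≤ C := by
    rcases hA.eq_or_lt with hA0 | hA0
    · have hB0 : B = 0 := by nlinarith
      simpa [hB0] using hC
    · exact le_of_mul_le_mul_right (by nlinarith) hA0
  have hDB : D * B ≤ ω ^ 2 * (M * I) := by
    nlinarith [mul_le_mul_of_nonneg_left hωB (sq_nonneg ω),
      mul_le_mul_of_nonpos_left hwirt hcm, mul_le_mul_of_nonneg_left henergy (sq_nonneg ω)]
  have hDB2 : D ^ 2 * B ≤ ω ^ 2 * (b - a) * M ^ 2 := by
    rcases hB.eq_or_lt with hB0 | hB0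
    · rw [← hB0, mul_zero]
      positivity
    · refine le_of_mul_le_mul_right ?_ hB0
      calc D ^ 2 * B * B = (D * B) ^ 2 := by ring
        _ ≤ (ω ^ 2 * (M * I)) ^ 2 := pow_le_pow_left₀ (mul_nonneg hD hB) hDB 2
        _ = ω ^ 2 * M ^ 2 * ω ^ 2 * I ^ 2 := by ring
        _ ≤ ω ^ 2 * M ^ 2 * ω ^ 2 * ((b - a) * A) := by gcongr
        _ = ω ^ 2 * M ^ 2 * (b - a) * (ω ^ 2 * A) := by ring
        _ ≤ ω ^ 2 * M ^ 2 * (b - a) * B := by gcongr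
        _ = ω ^ 2 * (b - a) * M ^ 2 * B := by ring
  calc D ^ 2 * ((b - a) * B) = (b - a) * (D ^ 2 * B) := by ring
    _ ≤ (b - a) * (ω ^ 2 * (b - a) * M ^ 2) := by gcongr
    _ = (ω * (b - a) * M) ^ 2 := by ring
    _ = (π * M) ^ 2 := by rw [hω, div_mul_cancel₀ π (sub_pos.2 hab).ne']

theorem sq_two_mul_abs_le_mul_integral_sq_deriv {a b t : ℝ} {f f' : ℝ → ℝ}
    (hf : ∀ x ∈ Icc a b, HasDerivAt f (f' x) x) (hf' : ContinuousOn f' (Icc a b))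
    (ha : f a = 0) (hb : f b = 0) (ht : t ∈ Icc a b) :
    (2 * |f t|) ^ 2 ≤ (b - a) * ∫ x in a..b, f' x ^ 2 := by
  have hab : a ≤ b := ht.1.trans ht.2
  have hint : ∀ x ∈ Icc a b, ∀ y ∈ Icc a b, IntervalIntegrable f' volume x y :=
    fun x hx y hy => (hf'.mono (uIcc_subset_Icc hx hy)).intervalIntegrable
  have hftc : ∀ x ∈ Icc a b, ∀ y ∈ Icc a b, ∫ s in x..y, f' s = f y - f x :=
    fun x hx y hy => integral_eq_sub_of_hasDerivAt
      (fun s hs => hf s (uIcc_subset_Icc hx hy hs)) (hint x hx y hy)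
  have hleft : |f t| ≤ ∫ s in a..t, |f' s| := by
    rw [← sub_zero (f t), ← ha, ← hftc a (left_mem_Icc.2 hab) t ht]
    exact abs_integral_le_integral_abs ht.1
  have hright : |f t| ≤ ∫ s in t..b, |f' s| := by
    rw [← abs_neg, ← zero_sub, ← hb, ← hftc t ht b (right_mem_Icc.2 hab)]
    exact abs_integral_le_integral_abs ht.2
  have hsplit : (∫ s in a..t, |f' s|) + (∫ s in t..b, |f' s|) = ∫ s in a..b, |f' s| :=
    integral_add_adjacent_intervals (hint a (left_mem_Icc.2 hab) t ht).abs
      (hint t ht b (right_mem_Icc.2 hab)).abs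
  calc (2 * |f t|) ^ 2 ≤ (∫ s in a..b, |f' s|) ^ 2 := by gcongr; linarith
    _ ≤ (b - a) * ∫ x in a..b, f' x ^ 2 := sq_intervalIntegral_abs_le hab hf'

theorem stmt_10_general (a b p : ℝ) (hab : a < b) (c h : ℝ → ℝ)
    (hc : ContinuousOn c (Set.Icc a b)) (hh : ContinuousOn h (Set.Icc a b))
    (cm : ℝ) (hcm : IsLeast (c '' Set.Icc a b) cm)
    (hcm1 : -(π / (b - a)) ^ 4 - p * (π / (b - a)) ^ 2 < cm) (hcm2 : cm ≤ 0)
    (u : ℝ → ℝ) (hu : ContDiff ℝ 4 u)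
    (heq : ∀ t ∈ Set.Icc a b,
      iteratedDeriv 4 u t - p * iteratedDeriv 2 u t + c t * u t = h t)
    (hua : u a = 0) (hub : u b = 0)
    (hua'' : iteratedDeriv 2 u a = 0) (hub'' : iteratedDeriv 2 u b = 0) :
    ∀ t ∈ Set.Icc a b,
      |u t| ≤ (π / 2) * sSup ((fun t => |h t|) '' Set.Icc a b) /
        ((π / (b - a)) ^ 4 + p * (π / (b - a)) ^ 2 + cm) := by
  intro t ht
  set M := sSup ((fun t => |h t|) '' Icc a b)
  set D := (π / (b - a)) ^ 4 + p * (π / (b - a)) ^ 2 + cm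
  have hM : ∀ s ∈ Icc a b, |h s| ≤ M := fun s hs =>
    le_csSup (isCompact_Icc.image_of_continuousOn hh.abs).bddAbove ⟨s, hs, rfl⟩
  have hM0 : 0 ≤ M := (abs_nonneg _).trans (hM a (left_mem_Icc.2 hab.le))
  have hD : 0 < D := by linarith
  have hgrad := sq_mul_integral_sq_deriv_le_of_energy_le hab hD.le hcm2 (hu.of_le (by norm_num))
    hua hub (beam_energy_le hab.le hc hh (fun s hs => hcm.2 ⟨s, hs, rfl⟩) hM hu heq
      hua hub hua'' hub'')
  have hpt := sq_two_mul_abs_le_mul_integral_sq_deriv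
    (fun x _ => iteratedDeriv_one (f := u) ▸ (hu.differentiable (by norm_num) x).hasDerivAt)
    (hu.continuous_iteratedDeriv 1 (by norm_num)).continuousOn hua hub ht
  have hDu : D * (2 * |u t|) ≤ π * M := by
    refine (sq_le_sq₀ (by positivity) (by positivity)).1 ?_
    calc (D * (2 * |u t|)) ^ 2 = D ^ 2 * (2 * |u t|) ^ 2 := by ring
      _ ≤ D ^ 2 * ((b - a) * ∫ x in a..b, iteratedDeriv 1 u x ^ 2) := by gcongr
      _ ≤ (π * M) ^ 2 := hgrad
  rw [le_div_iff₀ hD]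
  linarith

/-- Sup-norm a priori bound for solutions of
`u⁗ - p u'' + c u = h`, `u(a)=u(b)=u''(a)=u''(b)=0`, when
`-(π/(b-a))⁴ - p(π/(b-a))² < c_m := min_I c ≤ 0`:
`‖u‖_{C(I)} ≤ (π/2) ‖h‖_{C(I)} / ((π/(b-a))⁴ + p(π/(b-a))² + c_m)`. -/
theorem stmt_10 (a b p : ℝ) (hab : a < b) (hp : 0 ≤ p) (c h : ℝ → ℝ)
    (hc : ContinuousOn c (Set.Icc a b)) (hh : ContinuousOn h (Set.Icc a b))
    (cm : ℝ) (hcm : IsLeast (c '' Set.Icc a b) cm)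
    (hcm1 : -(π / (b - a)) ^ 4 - p * (π / (b - a)) ^ 2 < cm) (hcm2 : cm ≤ 0)
    (u : ℝ → ℝ) (hu : ContDiff ℝ 4 u)
    (heq : ∀ t ∈ Set.Icc a b,
      iteratedDeriv 4 u t - p * iteratedDeriv 2 u t + c t * u t = h t)
    (hua : u a = 0) (hub : u b = 0)
    (hua'' : iteratedDeriv 2 u a = 0) (hub'' : iteratedDeriv 2 u b = 0) :
    ∀ t ∈ Set.Icc a b,
      |u t| ≤ (π / 2) * sSup ((fun t => |h t|) '' Set.Icc a b) /
        ((π / (b - a)) ^ 4 + p * (π / (b - a)) ^ 2 + cm) :=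
  stmt_10_general a b p hab c h hc hh cm hcm hcm1 hcm2 u hu heq hua hub hua'' hub''
end
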